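/- For every b ∈ ℂ, the polynomial l4(z,w) = 1 - (c/3) z + (c²/18) z² - (c/3) w - (c²/9) z w + (c²/18) w² is a Darboux factor (i.e. there exists a polynomial cofactor K with ∂l4/∂z · P + ∂l4/∂w · Q = K · l4) of the system P(z,w) = z + (1/36)(-9c z² + 18c z w - 9c w² - 2c² z³ + 6c² z² w - 6c² z w² + 2c² w³), Q(z,w) = -w + (1/36)(9c z² - 18c z w + 9c w² - 2c² z³ + 6c² z² w - 6c² z w² + 2c² w³). -/

import Mathlib

/-!
Both partial derivatives of `l4` are affine, so the Darboux identity is a polynomial identity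
that can be checked directly. The cofactor `K = (c/3)(w - z)` is forced by the lowest-order terms:
the linear part `(z, -w)` of the field applied to the linear part `-(c/3)(z + w)` of `l4`
gives `(c/3)(w - z)`, and `l4(0,0) = 1`.
-/

open Complex

section Quadratic

variable {𝕜 : Type*} [NontriviallyNormedField 𝕜]

theorem hasDerivAt_quadratic (a b d x : 𝕜) :
    HasDerivAt (fun y => a + b * y + d * y ^ 2) (b + 2 * d * x) x := by
  refine ((((hasDerivAt_id' x).const_mul b).const_add a).add
    ((hasDerivAt_pow 2 x).const_mul d)).congr_deriv ?_
  ring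

theorem deriv_quadratic (a b d x : 𝕜) :
    deriv (fun y => a + b * y + d * y ^ 2) x = b + 2 * d * x :=
  (hasDerivAt_quadratic a b d x).deriv

end Quadratic

/-- For every `c ∈ ℂ`, the polynomial `l4` is a Darboux factor of the system (P,Q). -/
theorem stmt4 (c : ℂ) :
    ∃ K : MvPolynomial (Fin 2) ℂ, ∀ z w : ℂ,
      deriv (fun z' : ℂ => 1 - (c/3)*z' + (c^2/18)*z'^2 - (c/3)*w - (c^2/9)*z'*w + (c^2/18)*w^2) z *
        (z + (1/36)*(-9*c*z^2 + 18*c*z*w - 9*c*w^2 - 2*c^2*z^3 + 6*c^2*z^2*w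
          - 6*c^2*z*w^2 + 2*c^2*w^3)) +
      deriv (fun w' : ℂ => 1 - (c/3)*z + (c^2/18)*z^2 - (c/3)*w' - (c^2/9)*z*w' + (c^2/18)*w'^2) w *
        (-w + (1/36)*(9*c*z^2 - 18*c*z*w + 9*c*w^2 - 2*c^2*z^3 + 6*c^2*z^2*w
          - 6*c^2*z*w^2 + 2*c^2*w^3)) =
      (MvPolynomial.eval (fun i : Fin 2 => if i = 0 then z else w) K) *
        (1 - (c/3)*z + (c^2/18)*z^2 - (c/3)*w - (c^2/9)*z*w + (c^2/18)*w^2) := by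
  refine ⟨MvPolynomial.C (c / 3) * (MvPolynomial.X 1 - MvPolynomial.X 0), fun z w => ?_⟩
  have hz : (fun z' : ℂ => 1 - (c/3)*z' + (c^2/18)*z'^2 - (c/3)*w - (c^2/9)*z'*w + (c^2/18)*w^2)
      = fun z' => (1 - c/3*w + c^2/18*w^2) + (-(c/3) - c^2/9*w) * z' + c^2/18 * z'^2 := by
    funext z'; ring
  have hw : (fun w' : ℂ => 1 - (c/3)*z + (c^2/18)*z^2 - (c/3)*w' - (c^2/9)*z*w' + (c^2/18)*w'^2)
      = fun w' => (1 - c/3*z + c^2/18*z^2) + (-(c/3) - c^2/9*z) * w' + c^2/18 * w'^2 := by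
    funext w'; ring
  simp only [hz, hw, deriv_quadratic, MvPolynomial.eval_mul, MvPolynomial.eval_sub,
    MvPolynomial.eval_C, MvPolynomial.eval_X, one_ne_zero, if_true, if_false]
  ring
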